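/- arXiv:0912.2174 — 5 statements merged into one kernel-verified Lean document; each statement's English description precedes it below -/
import Mathlib

section
/- Let f(x) = 1 - (1 + x) e^{-x} for x > 0, and let s be a real number with s ≠ 0. Then ∫₀^∞ f(x) x^{-2 + i s} dx = Γ(1 + i s) / (1 - i s) = -i s · Γ(-1 + i s). -/
open Complex

open Set MeasureTheory Filter Topology in
lemma stmt_3_aux (w : ℂ) (hw : w.re = -1) :
    (∫ x in Set.Ioi (0:ℝ),
        ((1 - (1 + x) * Real.exp (-x) : ℝ) : ℂ) * (x : ℂ)^(w - 1))
      = -Complex.Gamma (w + 2) / w := by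
  have hw0 : w ≠ 0 := by
    intro h; rw [h] at hw; simp at hw
  have hre2 : 0 < (w + 2).re := by simp [hw]
  -- basic bounds on f(x) = 1 - (1+x) e^{-x}
  have hfnonneg : ∀ x : ℝ, 0 ≤ x → 0 ≤ 1 - (1 + x) * Real.exp (-x) := by
    intro x hx
    have h1 : Real.exp (-x) * Real.exp x = 1 := by rw [← Real.exp_add]; simp
    nlinarith [Real.add_one_le_exp x, Real.exp_pos (-x)]
  have hfle1 : ∀ x : ℝ, 0 ≤ x → 1 - (1 + x) * Real.exp (-x) ≤ 1 := by
    intro x hx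
    nlinarith [Real.exp_pos (-x)]
  have hflesq : ∀ x : ℝ, 0 ≤ x → 1 - (1 + x) * Real.exp (-x) ≤ x ^ 2 := by
    intro x hx
    nlinarith [Real.add_one_le_exp (-x)]
  -- norm of the coerced f
  have hnormf : ∀ x : ℝ, 0 ≤ x →
      ‖((1 - (1 + x) * Real.exp (-x) : ℝ) : ℂ)‖ = 1 - (1 + x) * Real.exp (-x) := by
    intro x hx
    rw [Complex.norm_real, Real.norm_eq_abs, _root_.abs_of_nonneg (hfnonneg x hx)]
  -- norm of cpow
  have hnormpow : ∀ (x : ℝ) (c : ℂ), 0 < x → ‖(x : ℂ) ^ c‖ = x ^ c.re := by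
    intro x c hx
    rw [Complex.norm_cpow_eq_rpow_re_of_pos hx]
  -- the auxiliary integral G
  set g : ℝ → ℂ := fun t => (Real.exp (-t) : ℂ) * (t : ℂ) ^ (w + 1) with hg_def
  have hg_eq : (fun t : ℝ => (Real.exp (-t) : ℂ) * (t : ℂ) ^ ((w + 2) - 1)) = g := by
    funext t
    have : (w + 2) - 1 = w + 1 := by ring
    rw [this]
  have hgint : IntegrableOn g (Ioi (0:ℝ)) := by
    rw [← hg_eq]
    exact Complex.GammaIntegral_convergent hre2
  set G : ℝ → ℂ := fun X => ∫ t in (0:ℝ)..X, g t with hG_def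
  have hGgamma : Tendsto G atTop (𝓝 (Complex.GammaIntegral (w + 2))) := by
    have := Complex.tendsto_partialGamma (s := w + 2) hre2
    have hpg : (fun X : ℝ => Complex.partialGamma (w + 2) X) = G := by
      funext X
      rw [Complex.partialGamma, hG_def, ← hg_eq]
    rwa [hpg] at this
  -- the antiderivative F
  set F : ℝ → ℂ := fun x =>
    ((1 - (1 + x) * Real.exp (-x) : ℝ) : ℂ) * (x : ℂ) ^ w / w - (1 / w) * G x with hF_def
  -- derivative of F on Ioi 0
  have hderiv : ∀ x ∈ Ioi (0:ℝ), HasDerivAt F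
      (((1 - (1 + x) * Real.exp (-x) : ℝ) : ℂ) * (x : ℂ) ^ (w - 1)) x := by
    intro x hx
    have hx0 : (0:ℝ) < x := hx
    have hxne : (x : ℂ) ≠ 0 := Complex.ofReal_ne_zero.mpr hx0.ne'
    -- derivative of the real f, coerced
    have hd1r : HasDerivAt (fun y : ℝ => 1 - (1 + y) * Real.exp (-y))
        (x * Real.exp (-x)) x := by
      have he : HasDerivAt (fun y : ℝ => Real.exp (-y)) (Real.exp (-x) * (-1)) x :=
        (Real.hasDerivAt_exp (-x)).comp x (hasDerivAt_neg x)
      have hlin : HasDerivAt (fun y : ℝ => 1 + y) 1 x := by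
        simpa using (hasDerivAt_id x).const_add (1:ℝ)
      have := (hlin.mul he).const_sub (1:ℝ)
      refine this.congr_deriv (Eq.symm ?_)
      ring
    have hd1 : HasDerivAt (fun y : ℝ => ((1 - (1 + y) * Real.exp (-y) : ℝ) : ℂ))
        ((x * Real.exp (-x) : ℝ) : ℂ) x := hd1r.ofReal_comp
    -- derivative of y ↦ (y:ℂ)^w
    have hd2 : HasDerivAt (fun y : ℝ => (y : ℂ) ^ w) (w * (x : ℂ) ^ (w - 1)) x := by
      have hsl : (x : ℂ) ∈ Complex.slitPlane := Complex.ofReal_mem_slitPlane.2 hx0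
      have := ((hasDerivAt_id ((x : ℝ) : ℂ)).cpow_const (c := w) hsl).comp_ofReal
      simpa using this
    -- derivative of G
    have hd3 : HasDerivAt G (g x) x := by
      apply intervalIntegral.integral_hasDerivAt_right
      · rw [intervalIntegrable_iff_integrableOn_Ioc_of_le hx0.le]
        exact hgint.mono_set Ioc_subset_Ioi_self
      · exact ⟨Ioi 0, Ioi_mem_nhds hx0, hgint.1⟩
      · apply ContinuousAt.mul
        · exact (Complex.continuous_ofReal.comp
            (Real.continuous_exp.comp continuous_neg)).continuousAt
        · exact (continuousAt_cpow_const (Complex.ofReal_mem_slitPlane.2 hx0)).comp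
            Complex.continuous_ofReal.continuousAt
    have hmain := ((hd1.mul hd2).div_const w).sub (hd3.const_mul (1 / w))
    refine hmain.congr_deriv (Eq.symm ?_)
    have hpow : (x : ℂ) ^ (w + 1) = (x : ℂ) ^ w * x := by
      rw [Complex.cpow_add _ _ hxne, Complex.cpow_one]
    rw [hg_def]
    push_cast
    field_simp
    rw [hpow]
    ring
  -- integrability of the integrand
  have hcontOn : ContinuousOn
      (fun x : ℝ => ((1 - (1 + x) * Real.exp (-x) : ℝ) : ℂ) * (x : ℂ) ^ (w - 1))
      (Ioi (0:ℝ)) := by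
    apply ContinuousOn.mul
    · apply Continuous.continuousOn
      exact Complex.continuous_ofReal.comp
        (by continuity : Continuous (fun x : ℝ => 1 - (1 + x) * Real.exp (-x)))
    · apply continuousOn_of_forall_continuousAt
      intro x hx
      exact (continuousAt_cpow_const (Complex.ofReal_mem_slitPlane.2 hx)).comp
        Complex.continuous_ofReal.continuousAt
  have hmeasOn : AEStronglyMeasurable
      (fun x : ℝ => ((1 - (1 + x) * Real.exp (-x) : ℝ) : ℂ) * (x : ℂ) ^ (w - 1))
      (volume.restrict (Ioi (0:ℝ))) :=
    hcontOn.aestronglyMeasurable measurableSet_Ioi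
  have hwre : (w - 1).re = -2 := by simp [Complex.sub_re, hw]; norm_num
  have hnormint : ∀ x : ℝ, 0 < x →
      ‖((1 - (1 + x) * Real.exp (-x) : ℝ) : ℂ) * (x : ℂ) ^ (w - 1)‖
        = (1 - (1 + x) * Real.exp (-x)) * x ^ (-2 : ℝ) := by
    intro x hx
    rw [norm_mul, hnormf x hx.le, hnormpow x _ hx, hwre]
  have hint : IntegrableOn
      (fun x : ℝ => ((1 - (1 + x) * Real.exp (-x) : ℝ) : ℂ) * (x : ℂ) ^ (w - 1))
      (Ioi (0:ℝ)) := by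
    have hsplit : Ioc (0:ℝ) 1 ∪ Ioi (1:ℝ) = Ioi (0:ℝ) :=
      Set.Ioc_union_Ioi_eq_Ioi (by norm_num)
    rw [← hsplit]
    apply IntegrableOn.union
    · -- bounded by 1 on (0,1]
      refine ⟨hmeasOn.mono_set Ioc_subset_Ioi_self, ?_⟩
      apply MeasureTheory.HasFiniteIntegral.restrict_of_bounded (C := 1)
      · simp [Real.volume_Ioc]
      · filter_upwards [ae_restrict_mem measurableSet_Ioc] with x hx
        rw [hnormint x hx.1]
        have hxsq : (0:ℝ) < x ^ 2 := pow_pos hx.1 2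
        have h1 : x ^ (-2:ℝ) = (x ^ 2)⁻¹ := by
          rw [Real.rpow_neg hx.1.le, ← Real.rpow_natCast x 2]
          norm_num
        rw [h1, mul_inv_le_iff₀ hxsq, one_mul]
        exact hflesq x hx.1.le
    · -- dominated by x^(-2) on (1,∞)
      apply Integrable.mono (integrableOn_Ioi_rpow_of_lt (by norm_num : (-2:ℝ) < -1)
        (by norm_num : (0:ℝ) < 1))
      · exact hmeasOn.mono_set (Set.Ioi_subset_Ioi (by norm_num))
      · filter_upwards [ae_restrict_mem measurableSet_Ioi] with x hx
        have hx0 : (0:ℝ) < x := lt_trans one_pos hx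
        rw [hnormint x hx0, Real.norm_eq_abs,
          _root_.abs_of_nonneg (Real.rpow_nonneg hx0.le _)]
        have := hfle1 x hx0.le
        have hp : (0:ℝ) ≤ x ^ (-2:ℝ) := Real.rpow_nonneg hx0.le _
        nlinarith [hfnonneg x hx0.le]
  -- F is continuous within Ici 0 at 0, with F 0 = 0
  have hF0 : F 0 = 0 := by
    rw [hF_def]
    simp [hG_def, intervalIntegral.integral_same]
  have hcont : ContinuousWithinAt F (Ici (0:ℝ)) 0 := by
    rw [ContinuousWithinAt, hF0]
    have hA : Tendsto (fun x : ℝ =>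
        ((1 - (1 + x) * Real.exp (-x) : ℝ) : ℂ) * (x : ℂ) ^ w / w) (𝓝[Ici (0:ℝ)] 0)
        (𝓝 0) := by
      apply squeeze_zero_norm' (a := fun x : ℝ => x / ‖w‖)
      · filter_upwards [self_mem_nhdsWithin] with x hx
        rcases eq_or_lt_of_le (mem_Ici.mp hx) with h | h
        · simp [← h, Complex.zero_cpow hw0]
        · rw [norm_div, norm_mul, hnormf x h.le, hnormpow x _ h, hw]
          apply div_le_div_of_nonneg_right _ (norm_pos_iff.mpr hw0).le
          have h1 : x ^ (-1:ℝ) = x⁻¹ := by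
            rw [Real.rpow_neg h.le, Real.rpow_one]
          rw [h1]
          calc (1 - (1 + x) * Real.exp (-x)) * x⁻¹ ≤ x ^ 2 * x⁻¹ := by
                apply mul_le_mul_of_nonneg_right (hflesq x h.le) (by positivity)
            _ = x := by field_simp
      · have : Tendsto (fun x : ℝ => x / ‖w‖) (𝓝 0) (𝓝 (0 / ‖w‖)) :=
          (continuous_id.div_const ‖w‖).tendsto 0
        simpa using this.mono_left nhdsWithin_le_nhds
    have hB : Tendsto (fun x : ℝ => (1 / w) * G x) (𝓝[Ici (0:ℝ)] 0) (𝓝 0) := by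
      have hint01 : IntegrableOn g (uIcc (0:ℝ) 1) := by
        rw [uIcc_of_le (by norm_num : (0:ℝ) ≤ 1), integrableOn_Icc_iff_integrableOn_Ioc]
        exact hgint.mono_set Ioc_subset_Ioi_self
      have hGcont : ContinuousOn G (uIcc (0:ℝ) 1) :=
        intervalIntegral.continuousOn_primitive_interval hint01
      have h0mem : (0:ℝ) ∈ uIcc (0:ℝ) 1 := by
        rw [uIcc_of_le] <;> norm_num
      have ht : Tendsto G (𝓝[Ici (0:ℝ)] 0) (𝓝 (G 0)) := by
        have h2 := hGcont 0 h0mem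
        rw [ContinuousWithinAt] at h2
        rwa [uIcc_of_le (by norm_num : (0:ℝ) ≤ 1),
          nhdsWithin_Icc_eq_nhdsGE (by norm_num : (0:ℝ) < 1)] at h2
      have hG0 : G 0 = 0 := intervalIntegral.integral_same
      rw [hG0] at ht
      simpa using ht.const_mul (1 / w)
    have h := hA.sub hB
    rw [hF_def]
    simpa only [sub_zero] using h
  -- F tends to -(1/w) * GammaIntegral (w+2) at infinity
  have htop : Tendsto F atTop (𝓝 (-(1 / w) * Complex.GammaIntegral (w + 2))) := by
    have hA : Tendsto (fun x : ℝ =>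
        ((1 - (1 + x) * Real.exp (-x) : ℝ) : ℂ) * (x : ℂ) ^ w / w) atTop (𝓝 0) := by
      apply squeeze_zero_norm' (a := fun x : ℝ => x⁻¹ / ‖w‖)
      · filter_upwards [eventually_gt_atTop (0:ℝ)] with x hx
        rw [norm_div, norm_mul, hnormf x hx.le, hnormpow x _ hx, hw]
        apply div_le_div_of_nonneg_right _ (norm_pos_iff.mpr hw0).le
        have h1 : x ^ (-1:ℝ) = x⁻¹ := by
          rw [Real.rpow_neg hx.le, Real.rpow_one]
        rw [h1]
        calc (1 - (1 + x) * Real.exp (-x)) * x⁻¹ ≤ 1 * x⁻¹ :=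
              mul_le_mul_of_nonneg_right (hfle1 x hx.le) (by positivity)
          _ = x⁻¹ := one_mul _
      · have := tendsto_inv_atTop_zero (𝕜 := ℝ)
        have h2 : Tendsto (fun x : ℝ => x⁻¹ / ‖w‖) atTop (𝓝 (0 / ‖w‖)) :=
          this.div_const ‖w‖
        simpa using h2
    have hB : Tendsto (fun x : ℝ => (1 / w) * G x) atTop
        (𝓝 ((1 / w) * Complex.GammaIntegral (w + 2))) := hGgamma.const_mul _
    have h := hA.sub hB
    rw [hF_def]
    simpa only [zero_sub, neg_mul] using h
  -- conclude
  have key := integral_Ioi_of_hasDerivAt_of_tendsto hcont hderiv hint htop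
  rw [key, hF0, Complex.Gamma_eq_integral hre2]
  field_simp
  simp

theorem stmt_3 (s : ℝ) (hs : s ≠ 0) :
    (∫ x in Set.Ioi (0:ℝ),
        ((1 - (1 + x) * Real.exp (-x) : ℝ) : ℂ) * (x : ℂ)^(-2 + I * s))
      = Complex.Gamma (1 + I * s) / (1 - I * s) ∧
    (∫ x in Set.Ioi (0:ℝ),
        ((1 - (1 + x) * Real.exp (-x) : ℝ) : ℂ) * (x : ℂ)^(-2 + I * s))
      = -I * s * Complex.Gamma (-1 + I * s) := by
  have hw : ((-1 : ℂ) + I * s).re = -1 := by simp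
  have haux := stmt_3_aux (-1 + I * s) hw
  have hexp : (-1 + I * (s:ℂ)) - 1 = -2 + I * s := by ring
  rw [hexp] at haux
  have h2 : (-1 : ℂ) + I * s + 2 = 1 + I * s := by ring
  rw [h2] at haux
  have hwne : (-1 : ℂ) + I * s ≠ 0 := by
    intro h
    have := congrArg Complex.re h
    simp at this
  have hisne : (I : ℂ) * s ≠ 0 := by
    simp [Complex.ext_iff, hs]
  have h1mne : (1 : ℂ) - I * s ≠ 0 := by
    intro h
    have := congrArg Complex.re h
    simp at this
  constructor
  · rw [haux]
    rw [div_eq_div_iff hwne h1mne]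
    ring
  · rw [haux]
    have hrec1 : Complex.Gamma (1 + I * s) = (I * s) * Complex.Gamma (I * s) := by
      have := Complex.Gamma_add_one (I * s) hisne
      rw [← this]; ring_nf
    have hrec2 : Complex.Gamma (I * s) = (-1 + I * s) * Complex.Gamma (-1 + I * s) := by
      have := Complex.Gamma_add_one (-1 + I * s) hwne
      have he : (-1 : ℂ) + I * s + 1 = I * s := by ring
      rw [he] at this
      rw [this]
    rw [hrec1, hrec2]
    field_simp
end

section
/- Fix an integer b ≥ 1 and let f(x) = P(Po(x) ≥ b + 1) = 1 - Σ_{k=0}^{b} x^k e^{-x}/k! for x > 0. Then ∫₀^∞ f(x) x^{-2} dx = 1/b. -/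
open Real Filter MeasureTheory Set Topology

private noncomputable def Pp (n : ℕ) (x : ℝ) : ℝ := ∑ k ∈ Finset.range n, x ^ k / k.factorial

private lemma Pp_continuous (n : ℕ) : Continuous (Pp n) :=
  continuous_finset_sum _ fun k _ => (continuous_pow k).div_const _

private lemma Pp_zero (n : ℕ) : Pp (n + 1) 0 = 1 := by
  rw [Pp, Finset.sum_range_succ']
  simp [zero_pow]

private lemma hasDerivAt_Pp (n : ℕ) (x : ℝ) : HasDerivAt (Pp (n + 1)) (Pp n x) x := by
  have h : HasDerivAt (fun y : ℝ => ∑ k ∈ Finset.range (n + 1), y ^ k / (k.factorial : ℝ))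
      (∑ k ∈ Finset.range (n + 1), (k : ℝ) * x ^ (k - 1) / (k.factorial : ℝ)) x :=
    HasDerivAt.fun_sum fun k _ => (hasDerivAt_pow k x).div_const _
  have he : (fun y : ℝ => Pp (n + 1) y) = fun y => ∑ k ∈ Finset.range (n + 1), y ^ k / (k.factorial : ℝ) := rfl
  rw [show Pp (n+1) = fun y => ∑ k ∈ Finset.range (n + 1), y ^ k / (k.factorial : ℝ) from rfl]
  convert h using 1
  rw [Pp, Finset.sum_range_succ']
  simp only [Nat.cast_zero, zero_mul, zero_div, add_zero]
  refine Finset.sum_congr rfl fun k _ => ?_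
  rw [Nat.add_sub_cancel, Nat.factorial_succ]
  have hk : (k.factorial : ℝ) ≠ 0 := Nat.cast_ne_zero.2 k.factorial_ne_zero
  push_cast
  field_simp

private lemma hasDerivAt_exp_neg (x : ℝ) :
    HasDerivAt (fun y : ℝ => Real.exp (-y)) (-Real.exp (-x)) x := by
  have := (Real.hasDerivAt_exp (-x)).comp x (hasDerivAt_id x).neg
  simpa [Function.comp_def] using this

private noncomputable def Gf (m : ℕ) (x : ℝ) : ℝ :=
  -((1 - Real.exp (-x) * Pp (m + 2) x) * x⁻¹)
    - (1 / ((m : ℝ) + 1)) * (Real.exp (-x) * Pp (m + 1) x)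

private lemma hasDerivAt_F (m : ℕ) (x : ℝ) :
    HasDerivAt (fun y : ℝ => 1 - Real.exp (-y) * Pp (m + 2) y)
      (Real.exp (-x) * x ^ (m + 1) / ((m + 1).factorial : ℝ)) x := by
  have h := ((hasDerivAt_exp_neg x).mul (hasDerivAt_Pp (m + 1) x)).const_sub 1
  refine h.congr_deriv ?_
  symm
  rw [show Pp (m+2) x = Pp (m+1) x + x ^ (m+1) / ((m+1).factorial : ℝ) from Finset.sum_range_succ _ _]
  ring

theorem stmt_4 (b : ℕ) (hb : 1 ≤ b) :
    ∫ x in Set.Ioi (0:ℝ),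
        (1 - ∑ k ∈ Finset.range (b + 1), x^k * Real.exp (-x) / (Nat.factorial k)) * x^(-2 : ℝ)
      = 1 / b := by
  obtain ⟨m, rfl⟩ : ∃ m, b = m + 1 := ⟨b - 1, (Nat.succ_pred_eq_of_pos hb).symm⟩
  have hFs : ∀ x : ℝ, ∑ k ∈ Finset.range (m + 1 + 1), x ^ k * Real.exp (-x) / (Nat.factorial k)
      = Real.exp (-x) * Pp (m + 2) x := by
    intro x
    rw [Pp, Finset.mul_sum]
    exact Finset.sum_congr rfl fun k _ => by ring
  -- derivative of Gf is the integrand on Ioi 0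
  have hderiv : ∀ x ∈ Ioi (0:ℝ), HasDerivAt (Gf m)
      ((1 - ∑ k ∈ Finset.range (m + 1 + 1), x ^ k * Real.exp (-x) / (Nat.factorial k)) * x ^ (-2:ℝ)) x := by
    intro x hx
    have hx0 : (x:ℝ) ≠ 0 := ne_of_gt hx
    have h1 := (((hasDerivAt_F m x).mul (hasDerivAt_inv hx0)).neg)
    have h2 := (((hasDerivAt_exp_neg x).mul (hasDerivAt_Pp m x)).const_mul (1 / ((m:ℝ)+1)))
    have h := h1.sub h2
    refine h.congr_deriv ?_
    symm
    rw [hFs]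
    have hx2 : x ^ (-2:ℝ) = (x ^ 2)⁻¹ := by
      rw [show (-2:ℝ) = -((2:ℕ):ℝ) by norm_num, Real.rpow_neg (le_of_lt hx), Real.rpow_natCast]
    rw [hx2]
    rw [show Pp (m+2) x = Pp (m+1) x + x ^ (m+1) / ((m+1).factorial : ℝ) from Finset.sum_range_succ _ _,
        show Pp (m+1) x = Pp m x + x ^ m / ((m).factorial : ℝ) from Finset.sum_range_succ _ _]
    have hfac : ((m+1).factorial : ℝ) = ((m:ℝ)+1) * (m.factorial : ℝ) := by
      rw [Nat.factorial_succ]; push_cast; ring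
    rw [hfac]
    have hm : (m.factorial : ℝ) ≠ 0 := Nat.cast_ne_zero.2 m.factorial_ne_zero
    have hm1 : ((m:ℝ)+1) ≠ 0 := by positivity
    field_simp
    ring
  -- nonnegativity of the integrand
  have hnonneg : ∀ x ∈ Ioi (0:ℝ),
      0 ≤ (1 - ∑ k ∈ Finset.range (m + 1 + 1), x ^ k * Real.exp (-x) / (Nat.factorial k)) * x ^ (-2:ℝ) := by
    intro x hx
    refine mul_nonneg ?_ (Real.rpow_nonneg (le_of_lt hx) _)
    rw [hFs, sub_nonneg]
    have h1 : Real.exp (-x) * Pp (m+2) x ≤ Real.exp (-x) * Real.exp x :=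
      mul_le_mul_of_nonneg_left (Real.sum_le_exp_of_nonneg (le_of_lt hx) _) (Real.exp_nonneg _)
    rwa [← Real.exp_add, neg_add_cancel, Real.exp_zero] at h1
  -- tail: exp(-x) * Pp n x → 0
  have htail : ∀ n : ℕ, Tendsto (fun x : ℝ => Real.exp (-x) * Pp n x) atTop (𝓝 0) := by
    intro n
    have h := tendsto_finset_sum (Finset.range n)
      (fun k _ => ((tendsto_pow_mul_exp_neg_atTop_nhds_zero k).div_const ((k.factorial : ℝ))))
    simp only [zero_div, Finset.sum_const_zero] at h
    refine h.congr fun x => ?_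
    rw [Pp, Finset.mul_sum]
    exact Finset.sum_congr rfl fun k _ => by ring
  -- Gf → 0 at infinity
  have htop : Tendsto (Gf m) atTop (𝓝 0) := by
    have t1 : Tendsto (fun x : ℝ => (1 - Real.exp (-x) * Pp (m+2) x) * x⁻¹) atTop (𝓝 0) := by
      have := ((tendsto_const_nhds (x := (1:ℝ)) (f := atTop)).sub (htail (m+2))).mul tendsto_inv_atTop_zero
      simpa using this
    have h := t1.neg.sub ((htail (m+1)).const_mul (1 / ((m:ℝ)+1)))
    simp only [neg_zero, mul_zero, sub_zero] at h
    exact h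
  -- continuity at 0 from the right
  have hF0 : (1 : ℝ) - Real.exp (-0) * Pp (m+2) 0 = 0 := by
    rw [show m + 2 = (m+1) + 1 from rfl, Pp_zero]
    simp
  have hcont : ContinuousWithinAt (Gf m) (Ici (0:ℝ)) 0 := by
    have hd0 : HasDerivAt (fun y : ℝ => 1 - Real.exp (-y) * Pp (m + 2) y) 0 0 := by
      have := hasDerivAt_F m 0
      simpa [zero_pow] using this
    rw [hasDerivAt_iff_tendsto_slope] at hd0
    have hslope : Tendsto (fun x : ℝ => (1 - Real.exp (-x) * Pp (m+2) x) * x⁻¹) (𝓝[≠] (0:ℝ)) (𝓝 0) := by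
      refine hd0.congr fun x => ?_
      rw [slope_def_field, hF0, sub_zero, sub_zero, div_eq_mul_inv]
    have h1 : Tendsto (fun x : ℝ => -((1 - Real.exp (-x) * Pp (m+2) x) * x⁻¹)) (𝓝[Ici 0] (0:ℝ)) (𝓝 0) := by
      rw [← Set.Ioi_insert, nhdsWithin_insert, tendsto_sup]
      constructor
      · have : -((1 - Real.exp (-(0:ℝ)) * Pp (m+2) 0) * (0:ℝ)⁻¹) = 0 := by rw [hF0]; simp
        simpa [this] using tendsto_pure_nhds (fun x : ℝ => -((1 - Real.exp (-x) * Pp (m+2) x) * x⁻¹)) 0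
      · have hsub : Set.Ioi (0:ℝ) ⊆ {(0:ℝ)}ᶜ := fun x hx => ne_of_gt hx
        simpa using (hslope.mono_left (nhdsWithin_mono _ hsub)).neg
    have h2 : Tendsto (fun x : ℝ => (1 / ((m:ℝ)+1)) * (Real.exp (-x) * Pp (m+1) x)) (𝓝[Ici 0] (0:ℝ))
        (𝓝 ((1 / ((m:ℝ)+1)) * (Real.exp (-0) * Pp (m+1) 0))) := by
      exact (Continuous.tendsto (continuous_const.mul ((Real.continuous_exp.comp continuous_neg).mul (Pp_continuous (m+1)))) 0).mono_left nhdsWithin_le_nhds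
    have := h1.sub h2
    unfold ContinuousWithinAt Gf
    convert this using 2
    rw [hF0]
    simp
  have key := integral_Ioi_of_hasDerivAt_of_nonneg hcont hderiv hnonneg htop
  rw [key]
  have hG0 : Gf m 0 = -(1 / ((m:ℝ)+1)) := by
    unfold Gf
    rw [hF0, Pp_zero]
    simp
  rw [hG0]
  push_cast
  ring
end

section
/- Let p ∈ (0,1), q = 1 - p, and f(x) = (1 - e^{-p x})(1 - e^{-q x}) for x > 0. Then ∫₀^∞ f(x) x^{-2} dx = -p ln p - q ln q. -/
open MeasureTheory Set Real Filter

-- ∫ x in Ioi 0, exp (-(u*x)) dx = u⁻¹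
lemma int_exp_Ioi {u : ℝ} (hu : 0 < u) :
    ∫ x in Ioi (0:ℝ), Real.exp (-(u * x)) = u⁻¹ := by
  have h := integral_comp_mul_left_Ioi (fun t => Real.exp (-t)) 0 hu
  simp only [mul_zero, integral_exp_neg_Ioi_zero, smul_eq_mul, mul_one] at h
  exact h

-- antiderivative fact
lemma hasDeriv_exp_aux {x : ℝ} (hx : x ≠ 0) (u : ℝ) :
    HasDerivAt (fun s : ℝ => -(Real.exp (-(s * x)) / x)) (Real.exp (-(u * x))) u := by
  have h1 : HasDerivAt (fun s : ℝ => -(s * x)) (-x) u := (hasDerivAt_mul_const x).neg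
  have h2 : HasDerivAt (fun s : ℝ => -(Real.exp (-(s * x)) / x)) (-(Real.exp (-(u * x)) * -x / x)) u :=
    (h1.exp.div_const x).neg
  convert h2 using 1
  field_simp

lemma int_exp_param {x : ℝ} (hx : 0 < x) {a b : ℝ} (hab : a ≤ b) :
    ∫ u in Ioc a b, Real.exp (-(u * x))
      = (Real.exp (-(a * x)) - Real.exp (-(b * x))) / x := by
  rw [← intervalIntegral.integral_of_le hab]
  rw [intervalIntegral.integral_eq_sub_of_hasDerivAt (f := fun s => -(Real.exp (-(s * x)) / x))
    (fun u _ => hasDeriv_exp_aux hx.ne' u)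
    (by apply Continuous.intervalIntegrable; continuity)]
  field_simp
  ring

lemma frullani {a c : ℝ} (ha : 0 < a) (hc : 0 < c) :
    ∫ x in Ioi (0:ℝ), (Real.exp (-(a * x)) - Real.exp (-((a + c) * x))) / x
      = Real.log (a + c) - Real.log a := by
  set b := a + c with hb_def
  have hb : 0 < b := by positivity
  have hab : a ≤ b := by simp [hb_def, hc.le]
  have hmeas : AEStronglyMeasurable (Function.uncurry fun u x : ℝ => Real.exp (-(u * x)))
      ((volume.restrict (Ioc a b)).prod (volume.restrict (Ioi (0:ℝ)))) := by
    apply Continuous.aestronglyMeasurable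
    fun_prop
  have hInt : Integrable (Function.uncurry fun u x : ℝ => Real.exp (-(u * x)))
      ((volume.restrict (Ioc a b)).prod (volume.restrict (Ioi (0:ℝ)))) := by
    rw [integrable_prod_iff hmeas]
    constructor
    · rw [ae_restrict_iff' measurableSet_Ioc]
      filter_upwards with u hu
      have hu0 : 0 < u := lt_of_lt_of_le ha hu.1.le
      have := exp_neg_integrableOn_Ioi 0 hu0
      simp only [neg_mul] at this
      exact this
    · have hinv : IntegrableOn (fun u : ℝ => u⁻¹) (Ioc a b) := by
        apply IntegrableOn.mono_set _ Ioc_subset_Icc_self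
        apply ContinuousOn.integrableOn_Icc
        exact continuousOn_inv₀.mono (fun x hx => ne_of_gt (lt_of_lt_of_le ha hx.1))
      apply Integrable.congr hinv
      rw [Filter.EventuallyEq, ae_restrict_iff' measurableSet_Ioc]
      filter_upwards with u hu
      have hu0 : 0 < u := lt_of_lt_of_le ha hu.1.le
      simp [Real.norm_eq_abs, abs_of_pos (Real.exp_pos _), int_exp_Ioi hu0]
  have hswap := integral_integral_swap hInt
  have hL : ∫ u in Ioc a b, ∫ x in Ioi (0:ℝ), Real.exp (-(u * x)) = Real.log b - Real.log a := by
    rw [setIntegral_congr_fun measurableSet_Ioc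
      (fun u hu => int_exp_Ioi (lt_of_lt_of_le ha hu.1.le)),
      ← intervalIntegral.integral_of_le hab,
      integral_inv (notMem_uIcc_of_lt ha hb),
      Real.log_div hb.ne' ha.ne']
  have hR : ∫ x in Ioi (0:ℝ), ∫ u in Ioc a b, Real.exp (-(u * x))
      = ∫ x in Ioi (0:ℝ), (Real.exp (-(a * x)) - Real.exp (-(b * x))) / x := by
    apply setIntegral_congr_fun measurableSet_Ioi
    intro x hx
    exact int_exp_param hx hab
  rw [← hL, hswap, hR]

lemma integrableOn_log_Ioc {r : ℝ} (hr : 0 < r) (hr1 : r ≤ 1) :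
    IntegrableOn Real.log (Ioc 0 r) := by
  have hdom : IntegrableOn (fun x : ℝ => 2 * x ^ (-(1/2) : ℝ)) (Ioc 0 r) := by
    have h := intervalIntegral.intervalIntegrable_rpow' (show (-1:ℝ) < -(1/2) by norm_num) (a := (0:ℝ)) (b := r)
    rw [intervalIntegrable_iff_integrableOn_Ioc_of_le hr.le] at h
    exact h.const_mul 2
  apply Integrable.mono hdom Real.measurable_log.aestronglyMeasurable
  rw [ae_restrict_iff' measurableSet_Ioc]
  filter_upwards with x hx
  have hx0 : 0 < x := hx.1
  have hx1 : x ≤ 1 := le_trans hx.2 hr1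
  have hrp : 0 < x ^ (-(1/2):ℝ) := Real.rpow_pos_of_pos hx0 _
  rw [Real.norm_eq_abs, Real.norm_eq_abs, abs_of_nonpos (Real.log_nonpos hx0.le hx1),
    abs_of_nonneg (by positivity : (0:ℝ) ≤ 2 * x ^ (-(1/2):ℝ))]
  have h1 : Real.log (x ^ (-(1/2):ℝ)) = -(1/2) * Real.log x := Real.log_rpow hx0 _
  have h2 : Real.log (x ^ (-(1/2):ℝ)) ≤ x ^ (-(1/2):ℝ) - 1 :=
    Real.log_le_sub_one_of_pos hrp
  linarith

lemma integral_log_Ioc {r : ℝ} (hr : 0 < r) (hr1 : r ≤ 1) :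
    ∫ s in Ioc 0 r, Real.log s = r * Real.log r - r := by
  rw [← intervalIntegral.integral_of_le hr.le]
  have hcont : ContinuousOn (fun s : ℝ => s * Real.log s - s) (Icc 0 r) :=
    (Real.continuous_mul_log.sub continuous_id).continuousOn
  have hderiv : ∀ s ∈ Ioo (0:ℝ) r, HasDerivAt (fun s : ℝ => s * Real.log s - s) (Real.log s) s := by
    intro s hs
    have h := (Real.hasDerivAt_mul_log hs.1.ne').sub (hasDerivAt_id s)
    have h' : HasDerivAt (fun s : ℝ => s * Real.log s - s) (Real.log s + 1 - 1) s := h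
    simpa using h'
  have hint : IntervalIntegrable Real.log volume 0 r := by
    rw [intervalIntegrable_iff_integrableOn_Ioc_of_le hr.le]
    exact integrableOn_log_Ioc hr hr1
  rw [intervalIntegral.integral_eq_sub_of_hasDeriv_right_of_le hr.le hcont
    (fun s hs => (hderiv s hs).hasDerivWithinAt) hint]
  simp

theorem stmt_5 (p q : ℝ) (hp : p ∈ Set.Ioo (0:ℝ) 1) (hq : q = 1 - p) :
    ∫ x in Set.Ioi (0:ℝ),
        (1 - Real.exp (-(p * x))) * (1 - Real.exp (-(q * x))) * x^(-2 : ℝ)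
      = -p * Real.log p - q * Real.log q := by
  obtain ⟨hp0, hp1⟩ := hp
  have hq0 : 0 < q := by rw [hq]; linarith
  have hq1 : q < 1 := by rw [hq]; linarith
  have hpq : p + q = 1 := by rw [hq]; ring
  set G : ℝ → ℝ → ℝ := fun s x => Real.exp (-(s * x)) * (1 - Real.exp (-(q * x))) / x
    with hG_def
  -- G as a difference of exponentials
  have hG_eq : ∀ s : ℝ, ∀ x ∈ Ioi (0:ℝ),
      G s x = (Real.exp (-(s * x)) - Real.exp (-((s + q) * x))) / x := by
    intro s x _
    rw [hG_def]
    have : Real.exp (-(s * x)) * Real.exp (-(q * x)) = Real.exp (-((s + q) * x)) := by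
      rw [← Real.exp_add]; ring_nf
    simp only [mul_sub, mul_one, this]
  -- G is nonneg on the domain
  have hG_nonneg : ∀ s ∈ Ioc (0:ℝ) p, ∀ x ∈ Ioi (0:ℝ), 0 ≤ G s x := by
    intro s _ x hx
    have hx0 : (0:ℝ) < x := hx
    have h1 : 0 ≤ 1 - Real.exp (-(q * x)) := by
      have : Real.exp (-(q * x)) ≤ 1 := by
        rw [Real.exp_le_one_iff]; nlinarith
      linarith
    rw [hG_def]
    positivity
  -- pointwise bound G s x ≤ exp (-(s*x)) * q
  have hG_bound : ∀ s ∈ Ioc (0:ℝ) p, ∀ x ∈ Ioi (0:ℝ),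
      G s x ≤ Real.exp (-(s * x)) * q := by
    intro s _ x hx
    have hx0 : (0:ℝ) < x := hx
    have h1 : 1 - Real.exp (-(q * x)) ≤ q * x := by
      have := Real.add_one_le_exp (-(q * x)); linarith
    rw [hG_def, div_le_iff₀ hx0]
    calc Real.exp (-(s * x)) * (1 - Real.exp (-(q * x)))
        ≤ Real.exp (-(s * x)) * (q * x) := by
          apply mul_le_mul_of_nonneg_left h1 (Real.exp_pos _).le
      _ = Real.exp (-(s * x)) * q * x := by ring
  -- the x-integral of G s for s > 0
  have hG_int : ∀ s ∈ Ioc (0:ℝ) p,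
      ∫ x in Ioi (0:ℝ), G s x = Real.log (s + q) - Real.log s := by
    intro s hs
    rw [setIntegral_congr_fun measurableSet_Ioi (hG_eq s)]
    exact frullani hs.1 hq0
  -- sections integrable
  have hsec : ∀ s ∈ Ioc (0:ℝ) p, Integrable (G s) (volume.restrict (Ioi (0:ℝ))) := by
    intro s hs
    have hg : IntegrableOn (fun x => Real.exp (-(s * x)) * q) (Ioi (0:ℝ)) := by
      have := exp_neg_integrableOn_Ioi 0 hs.1
      have h2 := this.mul_const q
      simp only [neg_mul] at h2
      exact h2
    apply Integrable.mono hg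
    · apply Measurable.aestronglyMeasurable
      fun_prop
    · rw [ae_restrict_iff' measurableSet_Ioi]
      filter_upwards with x hx
      rw [Real.norm_eq_abs, Real.norm_eq_abs, abs_of_nonneg (hG_nonneg s hs x hx),
        abs_of_nonneg (by positivity)]
      exact hG_bound s hs x hx
  -- integrability of s ↦ log (s+q) on Ioc 0 p
  have hlogq : IntegrableOn (fun s : ℝ => Real.log (s + q)) (Ioc 0 p) := by
    apply IntegrableOn.mono_set _ Ioc_subset_Icc_self
    apply ContinuousOn.integrableOn_Icc
    apply ContinuousOn.log (by fun_prop)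
    intro s hs
    nlinarith [hs.1]
  have hlogdiff : IntegrableOn (fun s : ℝ => Real.log (s + q) - Real.log s) (Ioc 0 p) :=
    hlogq.sub (integrableOn_log_Ioc hp0 hp1.le)
  -- full integrability on the product
  have hInt : Integrable (Function.uncurry G)
      ((volume.restrict (Ioc (0:ℝ) p)).prod (volume.restrict (Ioi (0:ℝ)))) := by
    rw [integrable_prod_iff]
    · refine ⟨?_, ?_⟩
      · rw [ae_restrict_iff' measurableSet_Ioc]
        filter_upwards with s hs
        exact hsec s hs
      · apply Integrable.congr hlogdiff
        rw [Filter.EventuallyEq, ae_restrict_iff' measurableSet_Ioc]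
        filter_upwards with s hs
        rw [← hG_int s hs]
        rw [setIntegral_congr_fun measurableSet_Ioi
          (fun x hx => (Real.norm_of_nonneg (hG_nonneg s hs x hx)).symm)]
        rfl
    · apply Measurable.aestronglyMeasurable
      rw [hG_def]
      fun_prop
  -- pointwise identity for the original integrand
  have hpoint : ∀ x ∈ Ioi (0:ℝ),
      (1 - Real.exp (-(p * x))) * (1 - Real.exp (-(q * x))) * x^(-2 : ℝ)
        = ∫ s in Ioc (0:ℝ) p, G s x := by
    intro x hx
    have hx0 : (0:ℝ) < x := hx
    have hxne : x ≠ 0 := hx0.ne'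
    rw [hG_def]
    simp only [mul_div_assoc]
    rw [MeasureTheory.integral_mul_const, int_exp_param hx0 hp0.le]
    have hrpow : x ^ (-2 : ℝ) = (x * x)⁻¹ := by
      rw [Real.rpow_neg hx0.le, show (2:ℝ) = ((2:ℕ):ℝ) by norm_num, Real.rpow_natCast, sq]
    rw [hrpow]
    simp only [zero_mul, neg_zero, Real.exp_zero]
    field_simp
  -- put everything together
  rw [setIntegral_congr_fun measurableSet_Ioi hpoint, ← integral_integral_swap hInt,
    setIntegral_congr_fun measurableSet_Ioc hG_int]
  rw [integral_sub hlogq (integrableOn_log_Ioc hp0 hp1.le), integral_log_Ioc hp0 hp1.le,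
    ← intervalIntegral.integral_of_le hp0.le, intervalIntegral.integral_comp_add_right _ q,
    zero_add, hpq, integral_log]
  simp only [Real.log_one]
  linarith
end

section
/- Let p ∈ (0,1), q = 1 - p, f(x) = (1 - e^{-p x})(1 - e^{-q x}), and let s be a nonzero real number. Then ∫₀^∞ f(x) x^{-2 + i s} dx = (1 - p^{1 - i s} - q^{1 - i s}) Γ(-1 + i s). In particular, if s = -2π m/d where d > 0 satisfies ln p, ln q ∈ d ℤ and m is a nonzero integer, this integral is 0. -/
open Complex MeasureTheory Set Filter

noncomputable def Fa (p q x : ℝ) : ℝ := (1 - Real.exp (-(p*x))) * (1 - Real.exp (-(q*x)))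
noncomputable def Fb (p q x : ℝ) : ℝ :=
  p * Real.exp (-(p*x)) * (1 - Real.exp (-(q*x))) + (1 - Real.exp (-(p*x))) * (q * Real.exp (-(q*x)))
noncomputable def Fc (p q x : ℝ) : ℝ :=
  -(p^2) * Real.exp (-(p*x)) - q^2 * Real.exp (-(q*x)) + (p+q)^2 * Real.exp (-((p+q)*x))

lemma hasDerivAt_expc (c x : ℝ) : HasDerivAt (fun y => Real.exp (-(c*y))) (-c * Real.exp (-(c*x))) x := by
  have h := (((hasDerivAt_id x).const_mul c).neg).exp
  simpa [mul_comm] using h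

lemma hasDerivAt_Fa (p q x : ℝ) : HasDerivAt (Fa p q) (Fb p q x) x := by
  have h := ((hasDerivAt_expc p x).const_sub 1).mul ((hasDerivAt_expc q x).const_sub 1)
  refine h.congr_deriv ?_
  unfold Fb; ring

lemma hasDerivAt_Fb (p q x : ℝ) : HasDerivAt (Fb p q) (Fc p q x) x := by
  have h := (((hasDerivAt_expc p x).const_mul p).mul ((hasDerivAt_expc q x).const_sub 1)).add
    (((hasDerivAt_expc p x).const_sub 1).mul ((hasDerivAt_expc q x).const_mul q))
  refine h.congr_deriv ?_
  unfold Fc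
  have : Real.exp (-((p+q)*x)) = Real.exp (-(p*x)) * Real.exp (-(q*x)) := by
    rw [← Real.exp_add]; ring_nf
  rw [this]; ring

lemma one_sub_exp_le (u : ℝ) : 1 - Real.exp (-u) ≤ u := by
  nlinarith [Real.add_one_le_exp (-u)]

lemma one_sub_exp_nonneg {u : ℝ} (hu : 0 ≤ u) : 0 ≤ 1 - Real.exp (-u) := by
  nlinarith [Real.exp_le_exp.mpr (neg_nonpos.mpr hu), Real.exp_zero]

lemma Fa_nonneg {p q x : ℝ} (hp : 0 < p) (hq : 0 < q) (hx : 0 ≤ x) : 0 ≤ Fa p q x :=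
  mul_nonneg (one_sub_exp_nonneg (by positivity)) (one_sub_exp_nonneg (by positivity))

lemma Fa_le_one {p q x : ℝ} (hp : 0 < p) (hq : 0 < q) (hx : 0 ≤ x) : Fa p q x ≤ 1 := by
  have h1 : 1 - Real.exp (-(p*x)) ≤ 1 := by nlinarith [Real.exp_pos (-(p*x))]
  have h2 : 1 - Real.exp (-(q*x)) ≤ 1 := by nlinarith [Real.exp_pos (-(q*x))]
  have h3 := one_sub_exp_nonneg (show (0:ℝ) ≤ p*x by positivity)
  have h4 := one_sub_exp_nonneg (show (0:ℝ) ≤ q*x by positivity)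
  unfold Fa
  exact mul_le_one₀ h1 h4 h2

lemma Fa_le_sq {p q x : ℝ} (hp : 0 < p) (hq : 0 < q) (hx : 0 ≤ x) : Fa p q x ≤ p*q*x^2 := by
  have h1 := one_sub_exp_le (p*x)
  have h2 := one_sub_exp_le (q*x)
  have h3 := one_sub_exp_nonneg (show (0:ℝ) ≤ p*x by positivity)
  have h4 := one_sub_exp_nonneg (show (0:ℝ) ≤ q*x by positivity)
  have : Fa p q x ≤ (p*x) * (q*x) := mul_le_mul h1 h2 h4 (by positivity)
  nlinarith

lemma Fb_nonneg {p q x : ℝ} (hp : 0 < p) (hq : 0 < q) (hx : 0 ≤ x) : 0 ≤ Fb p q x := by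
  have h3 := one_sub_exp_nonneg (show (0:ℝ) ≤ p*x by positivity)
  have h4 := one_sub_exp_nonneg (show (0:ℝ) ≤ q*x by positivity)
  have e1 := Real.exp_pos (-(p*x))
  have e2 := Real.exp_pos (-(q*x))
  unfold Fb
  exact add_nonneg (mul_nonneg (by positivity) h4) (mul_nonneg h3 (by positivity))

lemma Fb_le {p q x : ℝ} (hp : 0 < p) (hq : 0 < q) (hx : 0 ≤ x) :
    Fb p q x ≤ p*q*x*(Real.exp (-(p*x)) + Real.exp (-(q*x))) := by
  have h1 := one_sub_exp_le (p*x)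
  have h2 := one_sub_exp_le (q*x)
  have h3 := one_sub_exp_nonneg (show (0:ℝ) ≤ p*x by positivity)
  have h4 := one_sub_exp_nonneg (show (0:ℝ) ≤ q*x by positivity)
  have e1 := Real.exp_pos (-(p*x))
  have e2 := Real.exp_pos (-(q*x))
  unfold Fb
  have A : p * Real.exp (-(p*x)) * (1 - Real.exp (-(q*x))) ≤ p * Real.exp (-(p*x)) * (q*x) :=
    mul_le_mul_of_nonneg_left h2 (by positivity)
  have B : (1 - Real.exp (-(p*x))) * (q * Real.exp (-(q*x))) ≤ (p*x) * (q * Real.exp (-(q*x))) :=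
    mul_le_mul_of_nonneg_right h1 (by positivity)
  nlinarith [A, B]

lemma Fb_le' {p q x : ℝ} (hp : 0 < p) (hq : 0 < q) (hx : 0 ≤ x) :
    Fb p q x ≤ p * Real.exp (-(p*x)) + q * Real.exp (-(q*x)) := by
  have h1 : 1 - Real.exp (-(p*x)) ≤ 1 := by nlinarith [Real.exp_pos (-(p*x))]
  have h2 : 1 - Real.exp (-(q*x)) ≤ 1 := by nlinarith [Real.exp_pos (-(q*x))]
  have h3 := one_sub_exp_nonneg (show (0:ℝ) ≤ p*x by positivity)
  have h4 := one_sub_exp_nonneg (show (0:ℝ) ≤ q*x by positivity)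
  have e1 := Real.exp_pos (-(p*x))
  have e2 := Real.exp_pos (-(q*x))
  unfold Fb
  have A : p * Real.exp (-(p*x)) * (1 - Real.exp (-(q*x))) ≤ p * Real.exp (-(p*x)) * 1 :=
    mul_le_mul_of_nonneg_left h2 (by positivity)
  have B : (1 - Real.exp (-(p*x))) * (q * Real.exp (-(q*x))) ≤ 1 * (q * Real.exp (-(q*x))) :=
    mul_le_mul_of_nonneg_right h1 (by positivity)
  nlinarith [A, B]

lemma Fc_abs_le (p q x : ℝ) : |Fc p q x| ≤
    p^2 * Real.exp (-(p*x)) + q^2 * Real.exp (-(q*x)) + (p+q)^2 * Real.exp (-((p+q)*x)) := by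
  unfold Fc
  calc |(-(p^2) * Real.exp (-(p*x)) - q^2 * Real.exp (-(q*x)) + (p+q)^2 * Real.exp (-((p+q)*x)))|
      ≤ |(-(p^2) * Real.exp (-(p*x)) - q^2 * Real.exp (-(q*x)))| + |(p+q)^2 * Real.exp (-((p+q)*x))| := abs_add_le _ _
    _ ≤ (|(-(p^2) * Real.exp (-(p*x)))| + |q^2 * Real.exp (-(q*x))|) + |(p+q)^2 * Real.exp (-((p+q)*x))| := by
        gcongr; exact abs_sub _ _
    _ ≤ _ := by
        rw [abs_mul, abs_mul, abs_mul, abs_neg]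
        simp [_root_.abs_of_nonneg (Real.exp_pos _).le, _root_.abs_of_nonneg (sq_nonneg p), _root_.abs_of_nonneg (sq_nonneg q), _root_.abs_of_nonneg (sq_nonneg (p+q))]

lemma hasDerivAt_cpow_c {x : ℝ} (hx : 0 < x) {w : ℂ} (hw : w ≠ 0) :
    HasDerivAt (fun y : ℝ => (y:ℂ)^w) (w * (x:ℂ)^(w-1)) x := by
  have h := hasDerivAt_ofReal_cpow_const' hx.ne' (r := w - 1) (by
    intro h; apply hw; linear_combination h)
  rw [sub_add_cancel] at h
  have h2 := h.const_mul w
  exact h2.congr_of_eventuallyEq (Filter.Eventually.of_forall fun y => (mul_div_cancel₀ _ hw).symm)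

lemma norm_mul_cpow {g : ℝ} {x : ℝ} (hx : 0 < x) (w : ℂ) :
    ‖(g:ℂ) * (x:ℂ)^w‖ = |g| * x ^ w.re := by
  rw [norm_mul, Complex.norm_real, Real.norm_eq_abs, 
    Complex.norm_cpow_eq_rpow_re_of_pos hx]

lemma aesm_cpow_mul {g : ℝ → ℝ} (hg : Continuous g) (w : ℂ) :
    AEStronglyMeasurable (fun x : ℝ => (g x : ℂ) * (x:ℂ)^w) (volume.restrict (Ioi (0:ℝ))) := by
  apply ContinuousOn.aestronglyMeasurable _ measurableSet_Ioi
  intro x hx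
  exact (Complex.continuous_ofReal.comp hg).continuousWithinAt.mul
    ((continuousAt_ofReal_cpow_const _ _ (Or.inr (ne_of_gt hx))).continuousWithinAt)

lemma aesm_cpow_exp (r : ℝ) (w : ℂ) :
    AEStronglyMeasurable (fun x : ℝ => (x:ℂ)^w * Complex.exp (-(r*x))) (volume.restrict (Ioi (0:ℝ))) := by
  apply ContinuousOn.aestronglyMeasurable _ measurableSet_Ioi
  intro x hx
  refine ContinuousWithinAt.mul ((continuousAt_ofReal_cpow_const _ _ (Or.inr (ne_of_gt hx))).continuousWithinAt) ?_
  exact (Complex.continuous_exp.comp (by continuity)).continuousWithinAt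

lemma contFa (p q : ℝ) : Continuous (Fa p q) := by unfold Fa; continuity
lemma contFb (p q : ℝ) : Continuous (Fb p q) := by unfold Fb; continuity
lemma contFc (p q : ℝ) : Continuous (Fc p q) := by unfold Fc; continuity

lemma int_exp_c (c r : ℝ) (hr : 0 < r) :
    IntegrableOn (fun x : ℝ => c * Real.exp (-(r*x))) (Ioi (0:ℝ)) := by
  have h : IntegrableOn (fun x : ℝ => c * Real.exp (-r*x)) (Ioi 0) := (exp_neg_integrableOn_Ioi 0 hr).const_mul c
  simpa [neg_mul] using h

lemma int_cpow_exp {r : ℝ} (hr : 0 < r) {z : ℂ} (hz : z.re = 0) :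
    IntegrableOn (fun x : ℝ => (x:ℂ)^z * Complex.exp (-(r*x))) (Ioi (0:ℝ)) := by
  refine Integrable.mono' ((exp_neg_integrableOn_Ioi 0 hr).congr_fun (fun x _ => by simp only [neg_mul]; rfl) measurableSet_Ioi)
    (aesm_cpow_exp r z) ?_
  filter_upwards [ae_restrict_mem measurableSet_Ioi] with x hx
  rw [norm_mul, norm_cpow_eq_rpow_re_of_pos hx, hz,
    Real.rpow_zero, Complex.norm_exp, one_mul]
  simp

lemma intFc {p q : ℝ} (hp : 0 < p) (hq : 0 < q) {z : ℂ} (hz : z.re = 0) :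
    IntegrableOn (fun x : ℝ => (Fc p q x : ℂ) * (x:ℂ)^z) (Ioi (0:ℝ)) := by
  have hb : IntegrableOn (fun x : ℝ => p^2 * Real.exp (-(p*x)) + q^2 * Real.exp (-(q*x))
      + (p+q)^2 * Real.exp (-((p+q)*x))) (Ioi (0:ℝ)) :=
    ((int_exp_c _ _ hp).add (int_exp_c _ _ hq)).add (int_exp_c _ _ (by positivity))
  refine Integrable.mono' hb (aesm_cpow_mul (contFc p q) z) ?_
  filter_upwards [ae_restrict_mem measurableSet_Ioi] with x hx
  rw [norm_mul_cpow hx, hz, Real.rpow_zero, mul_one]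
  exact Fc_abs_le p q x

lemma intFb {p q : ℝ} (hp : 0 < p) (hq : 0 < q) {z : ℂ} (hz : z.re = -1) :
    IntegrableOn (fun x : ℝ => (Fb p q x : ℂ) * (x:ℂ)^z) (Ioi (0:ℝ)) := by
  have hb : IntegrableOn (fun x : ℝ => p*q * Real.exp (-(p*x)) + p*q * Real.exp (-(q*x))) (Ioi (0:ℝ)) :=
    (int_exp_c _ _ hp).add (int_exp_c _ _ hq)
  refine Integrable.mono' hb (aesm_cpow_mul (contFb p q) z) ?_
  filter_upwards [ae_restrict_mem measurableSet_Ioi] with x hx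
  rw [norm_mul_cpow hx, hz, _root_.abs_of_nonneg (Fb_nonneg hp hq hx.le),
    Real.rpow_neg_one]
  have h := mul_le_mul_of_nonneg_right (Fb_le hp hq hx.le) (inv_nonneg.mpr hx.le)
  calc Fb p q x * x⁻¹ ≤ p*q*x*(Real.exp (-(p*x)) + Real.exp (-(q*x))) * x⁻¹ := h
    _ = p*q * Real.exp (-(p*x)) + p*q * Real.exp (-(q*x)) := by
        have hxne : x ≠ 0 := ne_of_gt hx
        field_simp

lemma intFa {p q : ℝ} (hp : 0 < p) (hq : 0 < q) {z : ℂ} (hz : z.re = -2) :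
    IntegrableOn (fun x : ℝ => (Fa p q x : ℂ) * (x:ℂ)^z) (Ioi (0:ℝ)) := by
  rw [← Ioc_union_Ioi_eq_Ioi (zero_le_one (α := ℝ))]
  apply IntegrableOn.union
  · have hconst : IntegrableOn (fun _ : ℝ => p*q) (Ioc (0:ℝ) 1) volume := integrableOn_const measure_Ioc_lt_top.ne
    refine Integrable.mono' hconst
      ((aesm_cpow_mul (contFa p q) z).mono_measure (Measure.restrict_mono Ioc_subset_Ioi_self le_rfl)) ?_
    filter_upwards [ae_restrict_mem measurableSet_Ioc] with x hx
    have hx0 : 0 < x := hx.1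
    rw [norm_mul_cpow hx0, hz, _root_.abs_of_nonneg (Fa_nonneg hp hq hx0.le)]
    have hxr : x ^ (-2:ℝ) = (x^2)⁻¹ := by
      rw [Real.rpow_neg hx0.le, show ((2:ℝ)) = ((2:ℕ):ℝ) by norm_num, Real.rpow_natCast]
    rw [hxr]
    have h := mul_le_mul_of_nonneg_right (Fa_le_sq hp hq hx0.le) (inv_nonneg.mpr (sq_nonneg x))
    calc Fa p q x * (x^2)⁻¹ ≤ p*q*x^2 * (x^2)⁻¹ := h
      _ = p*q := by field_simp
  · refine Integrable.mono' (integrableOn_Ioi_rpow_of_lt (show (-2:ℝ) < -1 by norm_num) one_pos)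
      ((aesm_cpow_mul (contFa p q) z).mono_measure (Measure.restrict_mono (Ioi_subset_Ioi zero_le_one) le_rfl)) ?_
    filter_upwards [ae_restrict_mem measurableSet_Ioi] with x hx
    have hx0 : (0:ℝ) < x := lt_trans one_pos hx
    rw [norm_mul_cpow hx0, hz, _root_.abs_of_nonneg (Fa_nonneg hp hq hx0.le)]
    calc Fa p q x * x ^ (-2:ℝ) ≤ 1 * x ^ (-2:ℝ) :=
          mul_le_mul_of_nonneg_right (Fa_le_one hp hq hx0.le) (Real.rpow_nonneg hx0.le _)
      _ = x ^ (-2:ℝ) := one_mul _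

lemma ibp_step {g g' : ℝ → ℝ} {w : ℂ} (hw : w ≠ 0)
    (hderiv : ∀ x : ℝ, HasDerivAt g (g' x) x)
    (hg0 : g 0 = 0)
    (hlim0 : Tendsto (fun x : ℝ => (g x : ℂ) * (x:ℂ)^w) (nhdsWithin 0 (Ici 0)) (nhds 0))
    (hlimtop : Tendsto (fun x : ℝ => (g x : ℂ) * (x:ℂ)^w) atTop (nhds 0))
    (hint1 : IntegrableOn (fun x : ℝ => (g' x:ℂ)*(x:ℂ)^w) (Ioi 0))
    (hint2 : IntegrableOn (fun x : ℝ => (g x:ℂ)*(x:ℂ)^(w-1)) (Ioi 0)) :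
    ∫ x in Ioi (0:ℝ), (g' x:ℂ)*(x:ℂ)^w = - w * ∫ x in Ioi (0:ℝ), (g x:ℂ)*(x:ℂ)^(w-1) := by
  set f : ℝ → ℂ := fun x => (g x : ℂ) * (x:ℂ)^w with hf
  set D : ℝ → ℂ := fun x => (g' x:ℂ)*(x:ℂ)^w + w * ((g x:ℂ)*(x:ℂ)^(w-1)) with hD
  have hf0 : f 0 = 0 := by simp [hf, hg0]
  have hcont : ContinuousWithinAt f (Ici (0:ℝ)) 0 := by
    rw [ContinuousWithinAt, hf0]; exact hlim0
  have hd : ∀ x ∈ Ioi (0:ℝ), HasDerivAt f (D x) x := by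
    intro x hx
    have h := ((hderiv x).ofReal_comp).mul (hasDerivAt_cpow_c hx hw)
    refine h.congr_deriv ?_
    simp only [hD]; ring
  have hint : IntegrableOn D (Ioi (0:ℝ)) := hint1.add (hint2.const_mul w)
  have key := integral_Ioi_of_hasDerivAt_of_tendsto hcont hd hint hlimtop
  rw [hf0, sub_zero] at key
  rw [hD] at key
  rw [integral_add hint1 (hint2.const_mul w), MeasureTheory.integral_const_mul] at key
  linear_combination key

lemma tendsto_zero_of_le_linear {f : ℝ → ℂ} {c : ℝ}
    (hb : ∀ x ∈ Ici (0:ℝ), ‖f x‖ ≤ c * x) :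
    Tendsto f (nhdsWithin 0 (Ici 0)) (nhds 0) := by
  apply squeeze_zero_norm' (eventually_mem_nhdsWithin.mono fun x hx => hb x hx)
  have h : Tendsto (fun x : ℝ => c * x) (nhdsWithin 0 (Ici 0)) (nhds (c * 0)) :=
    ((continuous_const.mul continuous_id).tendsto 0).mono_left nhdsWithin_le_nhds
  simpa using h

lemma FaZero (p q : ℝ) : Fa p q 0 = 0 := by unfold Fa; simp
lemma FbZero (p q : ℝ) : Fb p q 0 = 0 := by unfold Fb; simp

lemma tendstoFa0 {p q : ℝ} (hp : 0 < p) (hq : 0 < q) {w : ℂ} (hw : w.re = -1) :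
    Tendsto (fun x : ℝ => (Fa p q x:ℂ)*(x:ℂ)^w) (nhdsWithin 0 (Ici 0)) (nhds 0) := by
  apply tendsto_zero_of_le_linear (c := p*q)
  intro x hx
  rcases eq_or_lt_of_le (mem_Ici.mp hx) with h | h
  · rw [← h]; simp [FaZero]
  · rw [norm_mul_cpow h, hw, _root_.abs_of_nonneg (Fa_nonneg hp hq h.le), Real.rpow_neg_one]
    have := mul_le_mul_of_nonneg_right (Fa_le_sq hp hq h.le) (inv_nonneg.mpr h.le)
    calc Fa p q x * x⁻¹ ≤ p*q*x^2 * x⁻¹ := this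
      _ = p*q*x := by field_simp [h.ne']

lemma tendstoFaTop {p q : ℝ} (hp : 0 < p) (hq : 0 < q) {w : ℂ} (hw : w.re = -1) :
    Tendsto (fun x : ℝ => (Fa p q x:ℂ)*(x:ℂ)^w) atTop (nhds 0) := by
  apply squeeze_zero_norm' (a := fun x : ℝ => x⁻¹) _ tendsto_inv_atTop_zero
  filter_upwards [eventually_ge_atTop (1:ℝ)] with x hx
  have h : (0:ℝ) < x := lt_of_lt_of_le one_pos hx
  rw [norm_mul_cpow h, hw, _root_.abs_of_nonneg (Fa_nonneg hp hq h.le), Real.rpow_neg_one]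
  calc Fa p q x * x⁻¹ ≤ 1 * x⁻¹ :=
        mul_le_mul_of_nonneg_right (Fa_le_one hp hq h.le) (inv_nonneg.mpr h.le)
    _ = x⁻¹ := one_mul _

lemma tendstoFb0 {p q : ℝ} (hp : 0 < p) (hq : 0 < q) {z : ℂ} (hz : z.re = 0) :
    Tendsto (fun x : ℝ => (Fb p q x:ℂ)*(x:ℂ)^z) (nhdsWithin 0 (Ici 0)) (nhds 0) := by
  apply tendsto_zero_of_le_linear (c := 2*(p*q))
  intro x hx
  rcases eq_or_lt_of_le (mem_Ici.mp hx) with h | h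
  · rw [← h]; simp [FbZero]
  · rw [norm_mul_cpow h, hz, Real.rpow_zero, mul_one,
      _root_.abs_of_nonneg (Fb_nonneg hp hq h.le)]
    have e1 : Real.exp (-(p*x)) ≤ 1 := by
      rw [← Real.exp_zero]; exact Real.exp_le_exp.mpr (by nlinarith)
    have e2 : Real.exp (-(q*x)) ≤ 1 := by
      rw [← Real.exp_zero]; exact Real.exp_le_exp.mpr (by nlinarith)
    have := Fb_le hp hq h.le
    nlinarith [this, mul_pos (mul_pos hp hq) h]

lemma tendstoFbTop {p q : ℝ} (hp : 0 < p) (hq : 0 < q) {z : ℂ} (hz : z.re = 0) :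
    Tendsto (fun x : ℝ => (Fb p q x:ℂ)*(x:ℂ)^z) atTop (nhds 0) := by
  have ht : Tendsto (fun x : ℝ => p * Real.exp (-(p*x)) + q * Real.exp (-(q*x))) atTop (nhds 0) := by
    have hp1 : Tendsto (fun x : ℝ => p*x) atTop atTop := Tendsto.const_mul_atTop hp tendsto_id
    have hq1 : Tendsto (fun x : ℝ => q*x) atTop atTop := Tendsto.const_mul_atTop hq tendsto_id
    have h1 : Tendsto (fun x : ℝ => Real.exp (-(p*x))) atTop (nhds 0) := by
      have := Real.tendsto_exp_neg_atTop_nhds_zero.comp hp1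
      exact Filter.Tendsto.congr (fun x => rfl) this
    have h2 : Tendsto (fun x : ℝ => Real.exp (-(q*x))) atTop (nhds 0) := by
      have := Real.tendsto_exp_neg_atTop_nhds_zero.comp hq1
      exact Filter.Tendsto.congr (fun x => rfl) this
    have := (h1.const_mul p).add (h2.const_mul q)
    simpa using this
  apply squeeze_zero_norm' _ ht
  filter_upwards [eventually_ge_atTop (0:ℝ)] with x hx
  rcases eq_or_lt_of_le hx with h | h
  · rw [← h]; simp [FbZero]
    positivity
  · rw [norm_mul_cpow h, hz, Real.rpow_zero, mul_one,
      _root_.abs_of_nonneg (Fb_nonneg hp hq h.le)]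
    exact Fb_le' hp hq h.le

lemma cpow_sq_inv {r : ℝ} (hr : 0 < r) (w : ℂ) :
    ((r:ℂ))^2 * (1/(r:ℂ))^(w+2) = (r:ℂ)^(-w) := by
  have hr0 : (r:ℂ) ≠ 0 := Complex.ofReal_ne_zero.mpr hr.ne'
  rw [one_div, Complex.inv_cpow _ _ (by
      rw [Complex.arg_ofReal_of_nonneg hr.le]; exact Ne.symm Real.pi_ne_zero),
    ← Complex.cpow_neg]
  rw [← Complex.cpow_natCast (r:ℂ) 2, ← Complex.cpow_add _ _ hr0]
  congr 1
  push_cast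
  ring

lemma int_Fc_eq {p q : ℝ} (hp : 0 < p) (hq : 0 < q) (hpq : p + q = 1) {w : ℂ}
    (hw1 : (w+1).re = 0) :
    ∫ x in Ioi (0:ℝ), (Fc p q x:ℂ) * (x:ℂ)^(w+1)
      = (1 - (p:ℂ)^(-w) - (q:ℂ)^(-w)) * Complex.Gamma (w+2) := by
  have hw2 : (w+2).re = 1 := by
    have e : w + 2 = (w+1) + 1 := by ring
    rw [e, Complex.add_re, hw1, Complex.one_re]; norm_num
  have hw2' : 0 < (w+2).re := by rw [hw2]; norm_num
  have G : ∀ r : ℝ, 0 < r →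
      ∫ x in Ioi (0:ℝ), (x:ℂ)^(w+1) * Complex.exp (-(r*x)) = (1/(r:ℂ))^(w+2) * Complex.Gamma (w+2) := by
    intro r hr
    have h := Complex.integral_cpow_mul_exp_neg_mul_Ioi hw2' hr
    have e : w + 2 - 1 = w + 1 := by ring
    rw [e] at h
    exact h
  have congrInt : ∀ x ∈ Ioi (0:ℝ), (Fc p q x:ℂ) * (x:ℂ)^(w+1)
      = -((p:ℂ)^2 * ((x:ℂ)^(w+1) * Complex.exp (-((p:ℝ)*x)))) - (q:ℂ)^2 * ((x:ℂ)^(w+1) * Complex.exp (-((q:ℝ)*x)))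
        + (x:ℂ)^(w+1) * Complex.exp (-((1:ℝ)*x)) := by
    intro x _
    unfold Fc
    rw [hpq]
    push_cast
    ring_nf
  rw [setIntegral_congr_fun measurableSet_Ioi congrInt]
  have i1 := int_cpow_exp hp hw1
  have i2 := int_cpow_exp hq hw1
  have i3 := int_cpow_exp one_pos hw1
  have j1 : IntegrableOn (fun x : ℝ => (p:ℂ)^2 * ((x:ℂ)^(w+1) * Complex.exp (-((p:ℝ)*x)))) (Ioi 0) volume := i1.const_mul _
  have j1n : IntegrableOn (fun x : ℝ => -((p:ℂ)^2 * ((x:ℂ)^(w+1) * Complex.exp (-((p:ℝ)*x))))) (Ioi 0) volume := j1.neg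
  have j2 : IntegrableOn (fun x : ℝ => (q:ℂ)^2 * ((x:ℂ)^(w+1) * Complex.exp (-((q:ℝ)*x)))) (Ioi 0) volume := i2.const_mul _
  have jA : IntegrableOn (fun x : ℝ => -((p:ℂ)^2 * ((x:ℂ)^(w+1) * Complex.exp (-((p:ℝ)*x))))
      - (q:ℂ)^2 * ((x:ℂ)^(w+1) * Complex.exp (-((q:ℝ)*x)))) (Ioi 0) volume := j1n.sub j2
  rw [integral_add jA i3, integral_sub j1n j2,
    integral_neg, MeasureTheory.integral_const_mul, MeasureTheory.integral_const_mul,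
    G p hp, G q hq, G 1 one_pos]
  have k1 := cpow_sq_inv hp w
  have k2 := cpow_sq_inv hq w
  have k3 : ((1:ℝ):ℂ) = 1 := by norm_num
  rw [k3, one_div_one, Complex.one_cpow]
  linear_combination (-(Complex.Gamma (w+2))) * k1 - Complex.Gamma (w+2) * k2

theorem stmt_6 (p q : ℝ) (hp : p ∈ Set.Ioo (0:ℝ) 1) (hq : q = 1 - p)
    (s : ℝ) (hs : s ≠ 0) :
    (∫ x in Set.Ioi (0:ℝ),
        (((1 - Real.exp (-(p * x))) * (1 - Real.exp (-(q * x))) : ℝ) : ℂ)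
          * (x : ℂ)^(-2 + I * s)
      = (1 - (p : ℂ)^(1 - I * s) - (q : ℂ)^(1 - I * s)) * Complex.Gamma (-1 + I * s)) ∧
    (∀ (d : ℝ) (m : ℤ), 0 < d →
      (∃ a : ℤ, Real.log p = a * d) → (∃ b : ℤ, Real.log q = b * d) →
      m ≠ 0 → s = -2 * Real.pi * m / d →
      (∫ x in Set.Ioi (0:ℝ),
          (((1 - Real.exp (-(p * x))) * (1 - Real.exp (-(q * x))) : ℝ) : ℂ)
            * (x : ℂ)^(-2 + I * s)) = 0) := by
  obtain ⟨hp0, hp1⟩ := hp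
  have hq0 : 0 < q := by rw [hq]; linarith
  have hpq : p + q = 1 := by rw [hq]; ring
  set w : ℂ := -1 + I*(s:ℝ) with hwdef
  clear_value w
  have hwre : w.re = -1 := by simp [hwdef]
  have hw1re : (w+1).re = 0 := by simp [hwdef]
  have hwm1re : (w-1).re = -2 := by simp [hwdef]; norm_num
  have hw0 : w ≠ 0 := by
    intro h
    rw [h, Complex.zero_re] at hwre
    norm_num at hwre
  have hw1 : w + 1 ≠ 0 := by
    intro h
    have him := congrArg Complex.im h
    simp [hwdef] at him
    exact hs him
  have S1 := ibp_step hw0 (hasDerivAt_Fa p q) (FaZero p q) (tendstoFa0 hp0 hq0 hwre)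
    (tendstoFaTop hp0 hq0 hwre) (intFb hp0 hq0 hwre) (intFa hp0 hq0 hwm1re)
  have hzre : ((w+1)-1).re = -1 := by rw [add_sub_cancel_right]; exact hwre
  have S2 := ibp_step hw1 (hasDerivAt_Fb p q) (FbZero p q) (tendstoFb0 hp0 hq0 hw1re)
    (tendstoFbTop hp0 hq0 hw1re) (intFc hp0 hq0 hw1re) (intFb hp0 hq0 hzre)
  simp only [add_sub_cancel_right] at S2
  have S3 := int_Fc_eq hp0 hq0 hpq hw1re
  have hG : Complex.Gamma (w+2) = (w+1) * (w * Complex.Gamma w) := by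
    have e : w + 2 = (w+1) + 1 := by ring
    rw [e, Complex.Gamma_add_one _ hw1, Complex.Gamma_add_one _ hw0]
  have main : ∫ x in Ioi (0:ℝ), (Fa p q x:ℂ)*(x:ℂ)^(w-1)
      = (1 - (p:ℂ)^(-w) - (q:ℂ)^(-w)) * Complex.Gamma w := by
    have h := S3
    rw [S2, S1, hG] at h
    have hne : (w+1)*w ≠ 0 := mul_ne_zero hw1 hw0
    apply mul_left_cancel₀ hne
    linear_combination h
  have hexp : (-2 : ℂ) + I*(s:ℝ) = w - 1 := by rw [hwdef]; ring
  have hnegw : -w = 1 - I*(s:ℝ) := by rw [hwdef]; ring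
  simp only [Fa] at main
  rw [hnegw] at main
  have part1 : ∫ x in Set.Ioi (0:ℝ),
      (((1 - Real.exp (-(p * x))) * (1 - Real.exp (-(q * x))) : ℝ) : ℂ)
        * (x : ℂ)^(-2 + I * s)
      = (1 - (p : ℂ)^(1 - I * s) - (q : ℂ)^(1 - I * s)) * Complex.Gamma w := by
    rw [hexp]
    exact main
  refine ⟨part1, ?_⟩
  rintro d m hd ⟨a, ha⟩ ⟨b, hb⟩ hm hsval
  rw [part1]
  have key : ∀ (r : ℝ), 0 < r → ∀ k : ℤ, Real.log r = k * d → (r:ℂ)^(1 - I*(s:ℝ)) = r := by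
    intro r hr k hk
    rw [Complex.cpow_def_of_ne_zero (Complex.ofReal_ne_zero.mpr hr.ne')]
    rw [(Complex.ofReal_log hr.le).symm]
    have split : ((Real.log r : ℝ) : ℂ) * (1 - I*(s:ℝ))
        = ((Real.log r : ℝ) : ℂ) + (((m*k : ℤ) : ℂ) * (2*(Real.pi:ℝ)*I)) := by
      rw [hk, hsval]
      push_cast
      field_simp [Complex.ofReal_ne_zero.mpr hd.ne']
      ring
    rw [split, Complex.exp_add, Complex.exp_int_mul_two_pi_mul_I, mul_one,
      ← Complex.ofReal_exp, Real.exp_log hr]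
  rw [key p hp0 a ha, key q hq0 b hb]
  have hz : (1:ℂ) - ↑p - ↑q = 0 := by
    rw [hq]; push_cast; ring
  rw [hz, zero_mul]
end

section
/- Let p ∈ (0,1), q = 1 - p, b ≥ 1 an integer, and for 1 ≤ j ≤ b set c_j = Σ_{k=b-j+1}^∞ ((j+k-2)!/(j! k!)) (p^j q^k + q^j p^k). Then Σ_{j=1}^{b} j c_j = -p ln p - q ln q. -/
open Finset

noncomputable def stmtCo (j k : ℕ) : ℝ :=
  (Nat.factorial (j + k - 2) : ℝ) / (Nat.factorial j * Nat.factorial k)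

noncomputable def stmtF (p q : ℝ) (j k : ℕ) : ℝ :=
  stmtCo j k * (p ^ j * q ^ k + q ^ j * p ^ k)

lemma stmtCo_nonneg (j k : ℕ) : 0 ≤ stmtCo j k := by
  unfold stmtCo
  positivity

lemma stmtCo_le_choose (j k : ℕ) : stmtCo j k ≤ ((k + j).choose j : ℝ) := by
  have h1 : (k + j).choose j * Nat.factorial j * Nat.factorial k = Nat.factorial (k + j) := by
    have := Nat.choose_mul_factorial_mul_factorial (Nat.le_add_left j k)
    simpa [Nat.add_sub_cancel] using this
  have hd : (0:ℝ) < (Nat.factorial j : ℝ) * Nat.factorial k := by positivity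
  rw [stmtCo, div_le_iff₀ hd]
  have h2 : (Nat.factorial (j + k - 2) : ℝ) ≤ (Nat.factorial (k + j) : ℝ) := by
    exact_mod_cast Nat.factorial_le (by omega)
  calc (Nat.factorial (j + k - 2) : ℝ) ≤ (Nat.factorial (k + j) : ℝ) := h2
    _ = ((k + j).choose j : ℝ) * (Nat.factorial j * Nat.factorial k) := by
        rw [← h1]; push_cast; ring

lemma summable_co_mul {x : ℝ} (h0 : 0 ≤ x) (h1 : x < 1) (j : ℕ) :
    Summable (fun k : ℕ => stmtCo j k * x ^ k) := by
  have hs : Summable (fun k : ℕ => ((k + j).choose j : ℝ) * x ^ k) :=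
    summable_choose_mul_geometric_of_norm_lt_one j (by rwa [Real.norm_eq_abs, abs_of_nonneg h0])
  refine Summable.of_nonneg_of_le
    (fun k => mul_nonneg (stmtCo_nonneg j k) (pow_nonneg h0 k)) (fun k => ?_) hs
  exact mul_le_mul_of_nonneg_right (stmtCo_le_choose j k) (pow_nonneg h0 k)

lemma summable_stmtF {p q : ℝ} (hp0 : 0 < p) (hp1 : p < 1) (hq0 : 0 < q) (hq1 : q < 1)
    (j : ℕ) : Summable (fun k : ℕ => stmtF p q j k) := by
  have := ((summable_co_mul hq0.le hq1 j).mul_left (p ^ j)).add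
    ((summable_co_mul hp0.le hp1 j).mul_left (q ^ j))
  refine this.congr (fun k => ?_)
  unfold stmtF; ring

lemma summable_ind {p q : ℝ} (hp0 : 0 < p) (hp1 : p < 1) (hq0 : 0 < q) (hq1 : q < 1)
    (j m : ℕ) : Summable (fun k : ℕ => if m ≤ k then stmtF p q j k else 0) := by
  have hF : ∀ k, 0 ≤ stmtF p q j k := by
    intro k
    unfold stmtF
    have := stmtCo_nonneg j k
    positivity
  refine Summable.of_nonneg_of_le (fun k => ?_) (fun k => ?_)
    (summable_stmtF hp0 hp1 hq0 hq1 j)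
  · split
    · exact hF k
    · exact le_rfl
  · split
    · exact le_rfl
    · exact hF k

lemma tsum_cut_step {p q : ℝ} (hp0 : 0 < p) (hp1 : p < 1) (hq0 : 0 < q) (hq1 : q < 1)
    (j m : ℕ) :
    (∑' k : ℕ, if m ≤ k then stmtF p q j k else 0)
      = stmtF p q j m + (∑' k : ℕ, if m + 1 ≤ k then stmtF p q j k else 0) := by
  have hpt : ∀ k : ℕ, (if m ≤ k then stmtF p q j k else 0)
      = (if k = m then stmtF p q j m else 0) + (if m + 1 ≤ k then stmtF p q j k else 0) := by
    intro k
    rcases eq_or_ne k m with rfl | h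
    · simp
    · by_cases h2 : m ≤ k
      · have h3 : m + 1 ≤ k := by omega
        simp [h, h2, h3]
      · have h3 : ¬ (m + 1 ≤ k) := by omega
        simp [h, h2, h3]
  rw [tsum_congr hpt, Summable.tsum_add (hasSum_ite_eq m (stmtF p q j m)).summable
    (summable_ind hp0 hp1 hq0 hq1 j (m+1)), tsum_ite_eq]

lemma hasSum_base {x : ℝ} (h0 : 0 < x) (h1 : x < 1) :
    HasSum (fun k : ℕ => if 1 ≤ k then stmtCo 1 k * x ^ k else 0) (-Real.log (1 - x)) := by
  have habs : |x| < 1 := by rw [abs_of_nonneg h0.le]; exact h1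
  have h := Real.hasSum_pow_div_log_of_abs_lt_one habs
  have heq : (fun n : ℕ =>
      (fun k : ℕ => if 1 ≤ k then stmtCo 1 k * x ^ k else 0) (n + 1))
      = fun n : ℕ => x ^ (n + 1) / (n + 1) := by
    funext n
    show (if 1 ≤ n + 1 then stmtCo 1 (n + 1) * x ^ (n + 1) else 0) = x ^ (n + 1) / (n + 1)
    have hn : 1 + (n + 1) - 2 = n := by omega
    have hfne : (n.factorial : ℝ) ≠ 0 := by positivity
    rw [if_pos (by omega : 1 ≤ n + 1), stmtCo, hn, Nat.factorial_one]
    have hf : ((n + 1).factorial : ℝ) = (n + 1) * n.factorial := by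
      exact_mod_cast Nat.factorial_succ n
    rw [hf]
    field_simp
    ring
  have h2 : HasSum (fun n : ℕ =>
      (fun k : ℕ => if 1 ≤ k then stmtCo 1 k * x ^ k else 0) (n + 1))
      (-Real.log (1 - x)) := by rw [heq]; exact h
  have h3 := (hasSum_nat_add_iff
    (f := fun k : ℕ => if 1 ≤ k then stmtCo 1 k * x ^ k else 0) 1).mp h2
  simpa using h3


lemma hasSum_negbin {x : ℝ} (h0 : 0 < x) (h1 : x < 1) (m : ℕ) :
    HasSum (fun k : ℕ => if 1 ≤ k then ((k + m).choose m : ℝ) * x ^ k else 0)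
      (1 / (1 - x) ^ (m + 1) - 1) := by
  have hx : ‖x‖ < 1 := by rw [Real.norm_eq_abs, abs_of_nonneg h0.le]; exact h1
  have h := hasSum_choose_mul_geometric_of_norm_lt_one (𝕜 := ℝ) m hx
  have hone : HasSum (fun k : ℕ => if k = 0 then (1:ℝ) else 0) 1 := hasSum_ite_eq 0 1
  refine (h.sub hone).congr_fun (fun k => ?_)
  rcases eq_or_ne k 0 with rfl | hk
  · simp
  · have hk1 : 1 ≤ k := by omega
    simp [hk, hk1]

lemma stmtCo_top (m k : ℕ) :
    stmtCo (m + 2) k = ((k + m).choose m : ℝ) / (((m:ℝ) + 1) * ((m:ℝ) + 2)) := by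
  have hn : m + 2 + k - 2 = k + m := by omega
  have hcf : (k + m).choose m * Nat.factorial m * Nat.factorial k = Nat.factorial (k + m) := by
    have := Nat.choose_mul_factorial_mul_factorial (Nat.le_add_left m k)
    simpa [Nat.add_sub_cancel] using this
  rw [stmtCo, hn]
  have h2 : ((m + 2).factorial : ℝ) = ((m:ℝ) + 2) * (((m:ℝ) + 1) * m.factorial) := by
    rw [show m + 2 = (m + 1) + 1 from rfl, Nat.factorial_succ, Nat.factorial_succ]
    push_cast; ring
  have h3 : ((k + m).factorial : ℝ) = ((k + m).choose m : ℝ) * m.factorial * k.factorial := by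
    exact_mod_cast hcf.symm
  rw [h3, h2]
  have hm : (m.factorial : ℝ) ≠ 0 := by positivity
  have hk : (k.factorial : ℝ) ≠ 0 := by positivity
  have hm1 : ((m:ℝ) + 1) ≠ 0 := by positivity
  have hm2 : ((m:ℝ) + 2) ≠ 0 := by positivity
  field_simp

lemma stmtCo_diag (m i : ℕ) (hi : i ≤ m) :
    ((i:ℝ) + 1) * stmtCo (i + 1) (m + 1 - i) = ((m + 1).choose i : ℝ) / ((m:ℝ) + 1) := by
  have hn : i + 1 + (m + 1 - i) - 2 = m := by omega
  have hcf : (m + 1).choose i * Nat.factorial i * Nat.factorial (m + 1 - i)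
      = Nat.factorial (m + 1) := by
    have := Nat.choose_mul_factorial_mul_factorial (show i ≤ m + 1 by omega)
    simpa [show m + 1 - i = m + 1 - i from rfl] using this
  rw [stmtCo, hn]
  have h1 : ((i + 1).factorial : ℝ) = ((i:ℝ) + 1) * i.factorial := by
    rw [Nat.factorial_succ]; push_cast; ring
  have h2 : ((m + 1).factorial : ℝ) = ((m:ℝ) + 1) * m.factorial := by
    rw [Nat.factorial_succ]; push_cast; ring
  have h3 : ((m + 1).choose i : ℝ) * i.factorial * (m + 1 - i).factorial
      = ((m:ℝ) + 1) * m.factorial := by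
    rw [← h2]; exact_mod_cast congrArg (fun n : ℕ => (n : ℝ)) hcf
  have hif : (Nat.factorial i : ℝ) ≠ 0 := by positivity
  have hmf : (Nat.factorial (m + 1 - i) : ℝ) ≠ 0 := by positivity
  have hi1 : ((i:ℝ) + 1) ≠ 0 := by positivity
  have hm1 : ((m:ℝ) + 1) ≠ 0 := by positivity
  rw [h1]
  have key : (m.factorial : ℝ) / (i.factorial * (m + 1 - i).factorial)
      = ((m + 1).choose i : ℝ) / ((m:ℝ) + 1) := by
    rw [div_eq_div_iff (by positivity) hm1]
    linear_combination -h3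
  calc ((i:ℝ) + 1) * ((m.factorial : ℝ) / (((i:ℝ) + 1) * i.factorial * (m + 1 - i).factorial))
      = (m.factorial : ℝ) / (i.factorial * (m + 1 - i).factorial) := by
        field_simp
    _ = _ := key

lemma etail {p q : ℝ} (hp0 : 0 < p) (hp1 : p < 1) (hq : q = 1 - p) (m : ℕ) :
    ((m:ℝ) + 2) * (∑' k : ℕ, if 1 ≤ k then stmtF p q (m + 2) k else 0)
      = (1 - p ^ (m + 2) - q ^ (m + 2)) / ((m:ℝ) + 1) := by
  have hq0 : 0 < q := by rw [hq]; linarith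
  have hq1 : q < 1 := by rw [hq]; linarith
  have hS : HasSum (fun k : ℕ => if 1 ≤ k then stmtF p q (m + 2) k else 0)
      ((p ^ (m + 2) * (1 / (1 - q) ^ (m + 1) - 1)
        + q ^ (m + 2) * (1 / (1 - p) ^ (m + 1) - 1)) / (((m:ℝ) + 1) * ((m:ℝ) + 2))) := by
    have h1 := (hasSum_negbin hq0 hq1 m).mul_left (p ^ (m + 2))
    have h2 := (hasSum_negbin hp0 hp1 m).mul_left (q ^ (m + 2))
    have h3 := (h1.add h2).div_const (((m:ℝ) + 1) * ((m:ℝ) + 2))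
    refine h3.congr_fun (fun k => ?_)
    rcases le_or_gt 1 k with hk | hk
    · simp only [if_pos hk]
      rw [stmtF, stmtCo_top]
      ring
    · have hk' : ¬ (1 ≤ k) := by omega
      simp [hk']
  rw [hS.tsum_eq, hq]
  have e : (1 : ℝ) - (1 - p) = p := by ring
  rw [e]
  have hp' : p ≠ 0 := ne_of_gt hp0
  have hp1' : (1 : ℝ) - p ≠ 0 := by linarith
  have hm1 : ((m:ℝ) + 1) ≠ 0 := by positivity
  have hm2 : ((m:ℝ) + 2) ≠ 0 := by positivity
  field_simp
  ring

lemma binom_aux (x y : ℝ) (m : ℕ) :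
    ∑ i ∈ Finset.range (m + 1), ((m + 1).choose i : ℝ) * x ^ i * y ^ (m + 1 - i)
      = (x + y) ^ (m + 1) - x ^ (m + 1) := by
  have h := add_pow x y (m + 1)
  rw [Finset.sum_range_succ] at h
  have e : m + 1 - (m + 1) = 0 := by omega
  rw [e] at h
  simp only [pow_zero, Nat.choose_self, Nat.cast_one, mul_one] at h
  have h2 : ∑ i ∈ Finset.range (m + 1), ((m + 1).choose i : ℝ) * x ^ i * y ^ (m + 1 - i)
      = ∑ i ∈ Finset.range (m + 1), x ^ i * y ^ (m + 1 - i) * ((m + 1).choose i : ℝ) := by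
    exact Finset.sum_congr rfl (fun i _ => by ring)
  rw [h2]
  linarith [h]

lemma dsum {p q : ℝ} (hp0 : 0 < p) (hp1 : p < 1) (hq : q = 1 - p) (m : ℕ) :
    ∑ j ∈ Finset.Icc 1 (m + 1), (j : ℝ) * stmtF p q j (m + 2 - j)
      = (1 - p ^ (m + 2) - q ^ (m + 2)) / ((m:ℝ) + 1) := by
  have hre : ∑ j ∈ Finset.Icc 1 (m + 1), (j : ℝ) * stmtF p q j (m + 2 - j)
      = ∑ i ∈ Finset.range (m + 1), ((i : ℝ) + 1) * stmtF p q (i + 1) (m + 1 - i) := by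
    rw [← Finset.Ico_add_one_right_eq_Icc, Finset.sum_Ico_eq_sum_range]
    refine Finset.sum_congr (by norm_num) (fun i _ => ?_)
    have e1 : 1 + i = i + 1 := by omega
    have e2 : m + 2 - (1 + i) = m + 1 - i := by omega
    rw [e2, e1]
    push_cast
    ring
  rw [hre]
  have hterm : ∀ i ∈ Finset.range (m + 1),
      ((i : ℝ) + 1) * stmtF p q (i + 1) (m + 1 - i)
        = (((m + 1).choose i : ℝ) * p ^ i * q ^ (m + 1 - i)) * (p / ((m:ℝ) + 1))
          + (((m + 1).choose i : ℝ) * q ^ i * p ^ (m + 1 - i)) * (q / ((m:ℝ) + 1)) := by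
    intro i hi
    have him : i ≤ m := by
      have := Finset.mem_range.mp hi; omega
    have hco := stmtCo_diag m i him
    rw [stmtF, show ((i:ℝ) + 1) * (stmtCo (i + 1) (m + 1 - i)
        * (p ^ (i + 1) * q ^ (m + 1 - i) + q ^ (i + 1) * p ^ (m + 1 - i)))
      = (((i:ℝ) + 1) * stmtCo (i + 1) (m + 1 - i))
        * (p ^ (i + 1) * q ^ (m + 1 - i) + q ^ (i + 1) * p ^ (m + 1 - i)) from by ring,
      hco]
    ring
  rw [Finset.sum_congr rfl hterm, Finset.sum_add_distrib, ← Finset.sum_mul, ← Finset.sum_mul,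
    binom_aux p q m, binom_aux q p m]
  rw [hq]
  ring

lemma main_lemma {p q : ℝ} (hp0 : 0 < p) (hp1 : p < 1) (hq : q = 1 - p) :
    ∀ b : ℕ, 1 ≤ b →
      ∑ j ∈ Finset.Icc 1 b, (j : ℝ) *
        (∑' k : ℕ, if b - j + 1 ≤ k then stmtF p q j k else 0)
      = -p * Real.log p - q * Real.log q := by
  have hq0 : 0 < q := by rw [hq]; linarith
  have hq1 : q < 1 := by rw [hq]; linarith
  intro b hb
  induction b, hb using Nat.le_induction with
  | base =>
    rw [Finset.Icc_self, Finset.sum_singleton]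
    have h := ((hasSum_base hq0 hq1).mul_left p).add ((hasSum_base hp0 hp1).mul_left q)
    have h2 : HasSum (fun k : ℕ => if 1 - 1 + 1 ≤ k then stmtF p q 1 k else 0)
        (p * -Real.log (1 - q) + q * -Real.log (1 - p)) := by
      refine h.congr_fun (fun k => ?_)
      rcases le_or_gt 1 k with hk | hk
      · have : 1 - 1 + 1 ≤ k := by omega
        simp only [if_pos hk, if_pos this, stmtF]
        ring
      · have h1' : ¬ (1 ≤ k) := by omega
        have h2' : ¬ (1 - 1 + 1 ≤ k) := by omega
        simp [h1', h2']
    rw [h2.tsum_eq, hq]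
    have e : (1 : ℝ) - (1 - p) = p := by ring
    rw [e]
    push_cast
    ring
  | succ n hn ih =>
    obtain ⟨m, rfl⟩ : ∃ m, n = m + 1 := ⟨n - 1, by omega⟩
    have hrw : m + 1 + 1 = m + 2 := by omega
    rw [hrw]
    rw [show (m + 2) = (m + 1) + 1 from rfl,
      Finset.sum_Icc_succ_top (by omega : 1 ≤ m + 1 + 1)]
    have hhead : ∀ j ∈ Finset.Icc 1 (m + 1),
        (j : ℝ) * (∑' k : ℕ, if m + 1 + 1 - j + 1 ≤ k then stmtF p q j k else 0)
          = (j : ℝ) * (∑' k : ℕ, if m + 1 - j + 1 ≤ k then stmtF p q j k else 0)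
            - (j : ℝ) * stmtF p q j (m + 2 - j) := by
      intro j hj
      obtain ⟨hj1, hj2⟩ := Finset.mem_Icc.mp hj
      have hstep := tsum_cut_step hp0 hp1 hq0 hq1 j (m + 1 - j + 1)
      have e1 : m + 1 - j + 1 = m + 2 - j := by omega
      have e2 : m + 1 - j + 1 + 1 = m + 1 + 1 - j + 1 := by omega
      rw [e2] at hstep
      have e3 : stmtF p q j (m + 1 - j + 1) = stmtF p q j (m + 2 - j) := by rw [e1]
      rw [e3] at hstep
      linear_combination (-(j : ℝ)) * hstep
    rw [Finset.sum_congr rfl hhead, Finset.sum_sub_distrib, ih, dsum hp0 hp1 hq m]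
    have hcut : m + 1 + 1 - (m + 1 + 1) + 1 = 1 := by omega
    rw [hcut]
    have ht := etail hp0 hp1 hq m
    push_cast
    linear_combination ht

theorem stmt_11 (p q : ℝ) (hp : p ∈ Set.Ioo (0:ℝ) 1) (hq : q = 1 - p)
    (b : ℕ) (hb : 1 ≤ b)
    (c : ℕ → ℝ)
    (hc : ∀ j, 1 ≤ j → j ≤ b →
      c j = ∑' k : ℕ, if b - j + 1 ≤ k then
        ((Nat.factorial (j + k - 2) : ℝ) / (Nat.factorial j * Nat.factorial k))
          * (p^j * q^k + q^j * p^k) else 0) :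
    ∑ j ∈ Finset.Icc 1 b, (j : ℝ) * c j = -p * Real.log p - q * Real.log q := by
  rw [← main_lemma hp.1 hp.2 hq b hb]
  refine Finset.sum_congr rfl (fun j hj => ?_)
  obtain ⟨h1, h2⟩ := Finset.mem_Icc.mp hj
  rw [hc j h1 h2]
  rfl
end
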